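/- Let q(t) solve the controlled dynamics q̈^j + Γ^j_{kℓ} q̇^k q̇^ℓ + M^{jℓ} ∂_ℓ V = ξ^j, and let the covector ξ along q, together with the covector p, satisfy the Pontryagin adjoint equations ξ̇_j = 2Γ^i_{kj} q̇^k ξ_i − p_j and ṗ_j = (∂_j Γ^i_{kℓ}) q̇^k q̇^ℓ ξ_i + ∂_j(M^{iℓ} ∂_ℓ V) ξ_i − (1/2)(∂_j M^{kℓ}) ξ_k ξ_ℓ. Then ξ satisfies the covariant second-order equation (D²ξ/dt²)_j + R^i_{kℓj} q̇^k q̇^ℓ ξ_i + (∇²_{jk} V) ξ^k = 0, where D/dt is the covariant derivative along q, R the Riemann curvature tensor of the metric M, and ∇² V the second covariant gradient of V. -/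

import Mathlib

open scoped BigOperators

/-- Partial derivative of a scalar field on `ℝⁿ` in the `i`-th coordinate direction. -/
noncomputable def pd {n : ℕ} (i : Fin n) (f : (Fin n → ℝ) → ℝ) (q : Fin n → ℝ) : ℝ :=
  fderiv ℝ f q (Pi.single i 1)

/-- Riemann curvature components
`R^j_{ikℓ} = ∂_ℓ Γ^j_{ik} − ∂_k Γ^j_{iℓ} + Γ^p_{ik} Γ^j_{pℓ} − Γ^p_{iℓ} Γ^j_{pk}`. -/
noncomputable def riemann {n : ℕ} (Γ : (Fin n → ℝ) → Fin n → Fin n → Fin n → ℝ)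
    (q : Fin n → ℝ) (j i k l : Fin n) : ℝ :=
  pd l (fun q' => Γ q' j i k) q - pd k (fun q' => Γ q' j i l) q
    + (∑ p, Γ q p i k * Γ q j p l) - ∑ p, Γ q p i l * Γ q j p k

/-- Covariant time derivative along the curve `q` of a covector `η`:
`(Dη/dt)_j = η̇_j − Γ^i_{jk} q̇^k η_i`. -/
noncomputable def covD {n : ℕ} (Γ : (Fin n → ℝ) → Fin n → Fin n → Fin n → ℝ)
    (q η : ℝ → Fin n → ℝ) (t : ℝ) (j : Fin n) : ℝ :=
  deriv (fun s => η s j) t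
    - ∑ i, ∑ k, Γ (q t) i j k * deriv (fun s => q s k) t * η t i

lemma contDiff_pd {n : ℕ} {f : (Fin n → ℝ) → ℝ} (hf : ContDiff ℝ (⊤ : ℕ∞) f) (l : Fin n) :
    ContDiff ℝ (⊤ : ℕ∞) (fun x => pd l f x) :=
  (ContinuousLinearMap.apply ℝ ℝ (Pi.single l 1) :
      ((Fin n → ℝ) →L[ℝ] ℝ) →L[ℝ] ℝ).contDiff.comp (hf.fderiv_right (by simp))

/-- chain rule -/
lemma hasDerivAt_comp_pd {n : ℕ} {f : (Fin n → ℝ) → ℝ} (hf : ContDiff ℝ (⊤ : ℕ∞) f)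
    {q : ℝ → Fin n → ℝ} (hq : ∀ i, ContDiff ℝ (⊤ : ℕ∞) fun s => q s i) (t : ℝ) :
    HasDerivAt (fun s => f (q s))
      (∑ k, pd k f (q t) * deriv (fun r => q r k) t) t := by
  have hq' : HasDerivAt q (fun k => deriv (fun r => q r k) t) t :=
    hasDerivAt_pi.2 fun i => (((hq i).differentiable (by simp)) t).hasDerivAt
  have hf' : HasFDerivAt f (fderiv ℝ f (q t)) (q t) :=
    ((hf.differentiable (by simp)) (q t)).hasFDerivAt
  have h := hf'.comp_hasDerivAt t hq'
  have : (fderiv ℝ f (q t)) (fun k => deriv (fun r => q r k) t)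
      = ∑ k, pd k f (q t) * deriv (fun r => q r k) t := by
    have h1 : (fun k => deriv (fun r => q r k) t)
        = ∑ k : Fin n, (deriv (fun r => q r k) t) • (Pi.single k 1 : Fin n → ℝ) := by
      rw [← Finset.univ_sum_single (fun k => deriv (fun r => q r k) t)]
      congr 1; funext k; ext m
      simp [Pi.single_apply]
    rw [h1, map_sum]
    refine Finset.sum_congr rfl fun k _ => ?_
    rw [map_smul, smul_eq_mul, pd, mul_comm]
  rwa [this] at h

/-- pd of a finite sum of products (the only product rule we need). -/
lemma pd_sum_mul {n : ℕ} (j : Fin n) (f g : Fin n → (Fin n → ℝ) → ℝ)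
    (hf : ∀ l, ContDiff ℝ (⊤ : ℕ∞) (f l)) (hg : ∀ l, ContDiff ℝ (⊤ : ℕ∞) (g l)) (x : Fin n → ℝ) :
    pd j (fun y => ∑ l, f l y * g l y) x
      = ∑ l, (pd j (f l) x * g l x + f l x * pd j (g l) x) := by
  unfold pd
  rw [fderiv_fun_sum (A := fun l y => f l y * g l y) (fun l _ => (((hf l).differentiable (by simp)) x).mul
      (((hg l).differentiable (by simp)) x))]
  rw [ContinuousLinearMap.sum_apply]
  refine Finset.sum_congr rfl fun l _ => ?_
  rw [fderiv_fun_mul (((hf l).differentiable (by simp)) x) (((hg l).differentiable (by simp)) x)]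
  simp only [ContinuousLinearMap.add_apply, ContinuousLinearMap.smul_apply, smul_eq_mul]
  ring

lemma pd_const {n : ℕ} (j : Fin n) (c : ℝ) (x : Fin n → ℝ) :
    pd j (fun _ => c) x = 0 := by
  unfold pd; rw [fderiv_const_apply]; simp

section MatrixFacts
open Matrix
variable {n : ℕ} {M Minv : (Fin n → ℝ) → Fin n → Fin n → ℝ}

lemma left_inv (hInv : ∀ q i l, (∑ j, M q i j * Minv q j l) = if i = l then 1 else 0)
    (q : Fin n → ℝ) (i l : Fin n) :
    (∑ j, Minv q i j * M q j l) = if i = l then 1 else 0 := by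
  have hAB : (Matrix.of fun a b => M q a b) * (Matrix.of fun a b => Minv q a b) = 1 := by
    ext a b
    simpa [Matrix.mul_apply, Matrix.one_apply] using hInv q a b
  have hBA := mul_eq_one_comm.mp hAB
  have := congrFun (congrFun hBA i) l
  simpa [Matrix.mul_apply, Matrix.one_apply] using this

lemma Minv_symm (hMsym : ∀ q k l, M q k l = M q l k)
    (hInv : ∀ q i l, (∑ j, M q i j * Minv q j l) = if i = l then 1 else 0)
    (q : Fin n → ℝ) (k l : Fin n) : Minv q k l = Minv q l k := by
  set A : Matrix (Fin n) (Fin n) ℝ := Matrix.of fun a b => M q a b with hA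
  set B : Matrix (Fin n) (Fin n) ℝ := Matrix.of fun a b => Minv q a b with hB
  have hAB : A * B = 1 := by
    ext a b
    simpa [hA, hB, Matrix.mul_apply, Matrix.one_apply] using hInv q a b
  have hBinv : B = A⁻¹ := (Matrix.inv_eq_right_inv hAB).symm
  have hAT : Aᵀ = A := by
    ext a b; simp [hA, Matrix.transpose_apply]; exact hMsym q b a
  have : Bᵀ = B := by
    rw [hBinv, Matrix.transpose_nonsing_inv, hAT]
  have := congrFun (congrFun this l) k
  simpa [hB, Matrix.transpose_apply] using this


lemma pdM_symm (hMsym : ∀ q k l, M q k l = M q l k) (r s t : Fin n) (x : Fin n → ℝ) :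
    pd r (fun q' => M q' s t) x = pd r (fun q' => M q' t s) x := by
  have h : (fun q' => M q' s t) = (fun q' => M q' t s) := funext fun y => hMsym y s t
  rw [h]

variable {Γ : (Fin n → ℝ) → Fin n → Fin n → Fin n → ℝ}

lemma Gamma_smooth (hMsmooth : ∀ k l, ContDiff ℝ (⊤ : ℕ∞) fun q => M q k l)
    (hMinvsmooth : ∀ k l, ContDiff ℝ (⊤ : ℕ∞) fun q => Minv q k l)
    (hΓ : ∀ q j i k, Γ q j i k =
      (1 / 2) * ∑ l, Minv q j l *
        (pd i (fun q' => M q' l k) q + pd k (fun q' => M q' l i) q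
          - pd l (fun q' => M q' i k) q))
    (j i k : Fin n) : ContDiff ℝ (⊤ : ℕ∞) (fun q => Γ q j i k) := by
  have h : (fun q => Γ q j i k) = fun q =>
      (1 / 2) * ∑ l, Minv q j l *
        (pd i (fun q' => M q' l k) q + pd k (fun q' => M q' l i) q
          - pd l (fun q' => M q' i k) q) := funext fun q => hΓ q j i k
  rw [h]
  exact contDiff_const.mul (ContDiff.sum fun l _ =>
    (hMinvsmooth j l).mul (((contDiff_pd (hMsmooth l k) i).add
      (contDiff_pd (hMsmooth l i) k)).sub (contDiff_pd (hMsmooth i k) l)))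

lemma Gamma_symm (hMsym : ∀ q k l, M q k l = M q l k)
    (hΓ : ∀ q j i k, Γ q j i k =
      (1 / 2) * ∑ l, Minv q j l *
        (pd i (fun q' => M q' l k) q + pd k (fun q' => M q' l i) q
          - pd l (fun q' => M q' i k) q))
    (q : Fin n → ℝ) (j i k : Fin n) : Γ q j i k = Γ q j k i := by
  rw [hΓ q j i k, hΓ q j k i]
  congr 1
  refine Finset.sum_congr rfl fun l _ => ?_
  rw [pdM_symm hMsym l i k q, pdM_symm hMsym i l k q, pdM_symm hMsym k l i q]
  ring_nf

lemma DWMW (hMsmooth : ∀ k l, ContDiff ℝ (⊤ : ℕ∞) fun q => M q k l)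
    (hMinvsmooth : ∀ k l, ContDiff ℝ (⊤ : ℕ∞) fun q => Minv q k l)
    (hInv : ∀ q i l, (∑ j, M q i j * Minv q j l) = if i = l then 1 else 0)
    (m a b : Fin n) (x : Fin n → ℝ) :
    pd m (fun q' => Minv q' a b) x
      = -∑ i, ∑ s, Minv x a i * pd m (fun q' => M q' i s) x * Minv x s b := by
  have step1 : ∀ i, (∑ s, M x i s * pd m (fun q' => Minv q' s b) x)
      = -∑ s, pd m (fun q' => M q' i s) x * Minv x s b := by
    intro i
    have h0 : (fun q' => ∑ s, M q' i s * Minv q' s b) = fun _ => if i = b then 1 else 0 :=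
      funext fun q' => hInv q' i b
    have h1 := pd_sum_mul m (fun s q' => M q' i s) (fun s q' => Minv q' s b)
      (fun s => hMsmooth i s) (fun s => hMinvsmooth s b) x
    rw [h0, pd_const, Finset.sum_add_distrib] at h1
    linarith [h1]
  calc pd m (fun q' => Minv q' a b) x
      = ∑ s, (if a = s then (1:ℝ) else 0) * pd m (fun q' => Minv q' s b) x := by
        simp [ite_mul]
    _ = ∑ s, (∑ i, Minv x a i * M x i s) * pd m (fun q' => Minv q' s b) x := by
        refine Finset.sum_congr rfl fun s _ => ?_
        rw [left_inv hInv x a s]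
    _ = ∑ i, Minv x a i * (∑ s, M x i s * pd m (fun q' => Minv q' s b) x) := by
        simp only [Finset.sum_mul, Finset.mul_sum]
        rw [Finset.sum_comm]
        exact Finset.sum_congr rfl fun i _ => Finset.sum_congr rfl fun s _ => by ring
    _ = -∑ i, ∑ s, Minv x a i * pd m (fun q' => M q' i s) x * Minv x s b := by
        rw [← Finset.sum_neg_distrib]
        refine Finset.sum_congr rfl fun i _ => ?_
        rw [step1 i, mul_neg, Finset.mul_sum, neg_inj]
        exact Finset.sum_congr rfl fun s _ => by ring

lemma I3 (hMsmooth : ∀ k l, ContDiff ℝ (⊤ : ℕ∞) fun q => M q k l)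
    (hMinvsmooth : ∀ k l, ContDiff ℝ (⊤ : ℕ∞) fun q => Minv q k l)
    (hMsym : ∀ q k l, M q k l = M q l k)
    (hInv : ∀ q i l, (∑ j, M q i j * Minv q j l) = if i = l then 1 else 0)
    (hΓ : ∀ q j i k, Γ q j i k =
      (1 / 2) * ∑ l, Minv q j l *
        (pd i (fun q' => M q' l k) q + pd k (fun q' => M q' l i) q
          - pd l (fun q' => M q' i k) q))
    (m a b : Fin n) (x : Fin n → ℝ) :
    pd m (fun q' => Minv q' a b) x
      = -∑ k, (Γ x b m k * Minv x k a + Γ x a m k * Minv x k b) := by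
  rw [DWMW hMsmooth hMinvsmooth hInv m a b x, neg_inj]
  have hW : ∀ s t, Minv x s t = Minv x t s := fun s t => Minv_symm hMsym hInv x s t
  calc (∑ i, ∑ s, Minv x a i * pd m (fun q' => M q' i s) x * Minv x s b)
      = ∑ k, ∑ l, ((1/2) * (Minv x b l *
            (pd m (fun q' => M q' l k) x + pd k (fun q' => M q' l m) x
              - pd l (fun q' => M q' m k) x)) * Minv x k a
          + (1/2) * (Minv x a k *
            (pd m (fun q' => M q' k l) x + pd l (fun q' => M q' k m) x
              - pd k (fun q' => M q' m l) x)) * Minv x l b) := by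
        refine Finset.sum_congr rfl fun k _ => Finset.sum_congr rfl fun l _ => ?_
        rw [pdM_symm hMsym m l k x, pdM_symm hMsym l k m x, pdM_symm hMsym k m l x,
            hW b l, hW k a]
        ring
    _ = (∑ k, ∑ l, (1/2) * (Minv x b l *
            (pd m (fun q' => M q' l k) x + pd k (fun q' => M q' l m) x
              - pd l (fun q' => M q' m k) x)) * Minv x k a)
        + ∑ k, ∑ l, (1/2) * (Minv x a k *
            (pd m (fun q' => M q' k l) x + pd l (fun q' => M q' k m) x
              - pd k (fun q' => M q' m l) x)) * Minv x l b := by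
        simp [Finset.sum_add_distrib]
    _ = (∑ k, ∑ l, (1/2) * (Minv x b l *
            (pd m (fun q' => M q' l k) x + pd k (fun q' => M q' l m) x
              - pd l (fun q' => M q' m k) x)) * Minv x k a)
        + ∑ k, ∑ l, (1/2) * (Minv x a l *
            (pd m (fun q' => M q' l k) x + pd k (fun q' => M q' l m) x
              - pd l (fun q' => M q' m k) x)) * Minv x k b := by
        congr 1
        exact Finset.sum_comm
    _ = ∑ k, (Γ x b m k * Minv x k a + Γ x a m k * Minv x k b) := by
        rw [← Finset.sum_add_distrib]
        refine Finset.sum_congr rfl fun k _ => ?_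
        rw [hΓ x b m k, hΓ x a m k, Finset.mul_sum, Finset.mul_sum,
          Finset.sum_mul, Finset.sum_mul]

end MatrixFacts


section perm
variable {α M : Type*} [Fintype α] [AddCommMonoid M]

lemma q2 (f : α → α → M) : (∑ a, ∑ b, f a b) = ∑ a, ∑ b, f b a := Finset.sum_comm

lemma q3_213 (f : α → α → α → M) :
    (∑ a, ∑ b, ∑ c, f a b c) = ∑ a, ∑ b, ∑ c, f b a c := Finset.sum_comm

lemma q3_132 (f : α → α → α → M) :
    (∑ a, ∑ b, ∑ c, f a b c) = ∑ a, ∑ b, ∑ c, f a c b :=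
  Finset.sum_congr rfl fun _ _ => Finset.sum_comm

lemma q3_231 (f : α → α → α → M) :
    (∑ a, ∑ b, ∑ c, f a b c) = ∑ a, ∑ b, ∑ c, f b c a :=
  (q3_132 f).trans (q3_213 (fun a b c => f a c b))

lemma q3_312 (f : α → α → α → M) :
    (∑ a, ∑ b, ∑ c, f a b c) = ∑ a, ∑ b, ∑ c, f c a b :=
  (q3_213 f).trans (q3_132 (fun a b c => f b a c))

lemma q4_12 (f : α → α → α → α → M) :
    (∑ a, ∑ b, ∑ c, ∑ d, f a b c d) = ∑ a, ∑ b, ∑ c, ∑ d, f b a c d := Finset.sum_comm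

lemma q4_23 (f : α → α → α → α → M) :
    (∑ a, ∑ b, ∑ c, ∑ d, f a b c d) = ∑ a, ∑ b, ∑ c, ∑ d, f a c b d :=
  Finset.sum_congr rfl fun _ _ => Finset.sum_comm

lemma q4_34 (f : α → α → α → α → M) :
    (∑ a, ∑ b, ∑ c, ∑ d, f a b c d) = ∑ a, ∑ b, ∑ c, ∑ d, f a b d c :=
  Finset.sum_congr rfl fun _ _ => Finset.sum_congr rfl fun _ _ => Finset.sum_comm

lemma q4_3241 (f : α → α → α → α → M) :
    (∑ a, ∑ b, ∑ c, ∑ d, f a b c d) = ∑ a, ∑ b, ∑ c, ∑ d, f c b d a :=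
  (q4_34 f).trans ((q4_23 (fun a b c d => f a b d c)).trans
    ((q4_12 (fun a b c d => f a c d b)).trans (q4_23 (fun a b c d => f b c d a))))

end perm

lemma key_algebra {n : ℕ} (j : Fin n)
    (G : Fin n → Fin n → Fin n → ℝ)
    (DG : Fin n → Fin n → Fin n → Fin n → ℝ)
    (W : Fin n → Fin n → ℝ)
    (v xi pp Vd Hs : Fin n → ℝ)
    (hGsym : ∀ i a b, G i a b = G i b a)
    (hWsym : ∀ a b, W a b = W b a)
    (hDGsym : ∀ l i a b, DG l i a b = DG l i b a) :
    (∑ x, ∑ y,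
        (((∑ l, DG l x j y * v l) * v y
            + G x j y * ((∑ l, W y l * xi l)
                - (∑ a, ∑ b, G y a b * v a * v b)
                - ∑ l, W y l * Vd l)) * xi x
          + G x j y * v y * (2 * (∑ i, ∑ k, G i k x * v k * xi i) - pp x)))
      - ((∑ i, ∑ k, ∑ l, DG j i k l * v k * v l * xi i)
          + (∑ x, (∑ y, ((-∑ k, (G y j k * W k x + G x j k * W k y)) * Vd y
              + W x y * Hs y)) * xi x)
          - 1 / 2 * ∑ x, ∑ y, (-∑ k, (G y j k * W k x + G x j k * W k y)) * xi x * xi y)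
      - (∑ x, ∑ y, G x j y * v y * ((∑ a, ∑ k, G a x k * v k * xi a) - pp x))
      + (∑ x, ∑ y, ∑ z,
          (DG j x y z - DG z x y j + (∑ p, G p y z * G x p j) - ∑ p, G p y j * G x p z)
            * v y * v z * xi x)
      + (∑ k, (Hs k - ∑ i, G i j k * Vd i) * (∑ l, W k l * xi l)) = 0 := by
  simp only [Finset.mul_sum, Finset.sum_mul, mul_sub, sub_mul, mul_add, add_mul,
    Finset.sum_sub_distrib, Finset.sum_add_distrib, mul_neg, neg_mul,
    Finset.sum_neg_distrib]
  simp only [hGsym, hWsym, hDGsym]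
  simp only [mul_assoc, mul_comm, mul_left_comm]
  -- h1 : T5 = 2 * T13
  have h1 : (∑ a, ∑ b, ∑ c, ∑ d, G a j b * (G c a d * (v b * (v d * (xi c * 2)))))
      = 2 * ∑ a, ∑ b, ∑ c, ∑ d, G a j b * (G c a d * (v b * (v d * xi c))) := by
    simp only [Finset.mul_sum]
    simp only [mul_assoc, mul_comm, mul_left_comm]
  -- h2 : T18 = T13
  have h2 : (∑ a, ∑ b, ∑ c, ∑ d, G a c d * (G d j b * (v b * (v c * xi a))))
      = ∑ a, ∑ b, ∑ c, ∑ d, G a j b * (G c a d * (v b * (v d * xi c))) := by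
    refine (q4_3241 _).trans ?_
    simp only [hGsym, hWsym, mul_assoc, mul_comm, mul_left_comm]
  -- h3 : T17 = T3
  have h3 : (∑ a, ∑ b, ∑ c, ∑ d, G a j d * (G d b c * (v b * (v c * xi a))))
      = ∑ a, ∑ b, ∑ c, ∑ d, G a j b * (G b c d * (v c * (v d * xi a))) := by
    refine Finset.sum_congr rfl fun a _ => ?_
    refine (q3_231 _).trans ?_
    simp only [mul_assoc, mul_comm, mul_left_comm]
  -- h4 : T11 = (1/2) T2
  have h4 : (∑ a, ∑ b, ∑ c, G b j c * (W a c * (xi a * (xi b * (1/2)))))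
      = (1/2) * ∑ a, ∑ b, ∑ c, G a j b * (W b c * (xi a * xi c)) := by
    refine (q3_312 _).trans ?_
    simp only [Finset.mul_sum]
    simp only [hWsym, mul_assoc, mul_comm, mul_left_comm]
  -- h5 : T12 = (1/2) T2
  have h5 : (∑ a, ∑ b, ∑ c, G a j c * (W b c * (xi a * (xi b * (1/2)))))
      = (1/2) * ∑ a, ∑ b, ∑ c, G a j b * (W b c * (xi a * xi c)) := by
    refine (q3_132 _).trans ?_
    simp only [Finset.mul_sum]
    simp only [hWsym, mul_assoc, mul_comm, mul_left_comm]
  -- h6 : T9 = T4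
  have h6 : (∑ a, ∑ b, ∑ c, G a j c * (W b c * (xi a * Vd b)))
      = ∑ a, ∑ b, ∑ c, G a j b * (W b c * (xi a * Vd c)) := by
    refine (q3_132 _).trans ?_
    simp only [hWsym, mul_assoc, mul_comm, mul_left_comm]
  -- h7 : T8 = T20
  have h7 : (∑ a, ∑ b, ∑ c, G b j c * (W a c * (xi a * Vd b)))
      = ∑ a, ∑ b, ∑ c, G c j a * (W a b * (xi b * Vd c)) := by
    refine (q3_231 _).trans ?_
    simp only [hWsym, mul_assoc, mul_comm, mul_left_comm]
  -- h8 : T19 = T10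
  have h8 : (∑ a, ∑ b, W a b * (xi b * Hs a)) = ∑ a, ∑ b, W a b * (xi a * Hs b) := by
    refine (q2 _).trans ?_
    simp only [hWsym, mul_assoc, mul_comm, mul_left_comm]
  linarith [h1, h2, h3, h4, h5, h6, h7, h8]

/-- Covariant evolution equation of the optimal force: the Pontryagin adjoint state `ξ`
satisfies `(D²ξ/dt²)_j + R^i_{kℓj} q̇^k q̇^ℓ ξ_i + (∇²_{jk} V) ξ^k = 0`. -/
theorem covariant_evolution_optimal_force {n : ℕ}
    (M Minv : (Fin n → ℝ) → Fin n → Fin n → ℝ)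
    (Γ : (Fin n → ℝ) → Fin n → Fin n → Fin n → ℝ)
    (V : (Fin n → ℝ) → ℝ)
    (hMsmooth : ∀ k l, ContDiff ℝ (⊤ : ℕ∞) fun q => M q k l)
    (hMinvsmooth : ∀ k l, ContDiff ℝ (⊤ : ℕ∞) fun q => Minv q k l)
    (hMsym : ∀ q k l, M q k l = M q l k)
    (hMpos : ∀ (q : Fin n → ℝ) (v : Fin n → ℝ), v ≠ 0 →
      0 < ∑ k, ∑ l, M q k l * v k * v l)
    (hInv : ∀ q i l, (∑ j, M q i j * Minv q j l) = if i = l then 1 else 0)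
    (hΓ : ∀ q j i k, Γ q j i k =
      (1 / 2) * ∑ l, Minv q j l *
        (pd i (fun q' => M q' l k) q + pd k (fun q' => M q' l i) q
          - pd l (fun q' => M q' i k) q))
    (hV : ContDiff ℝ (⊤ : ℕ∞) V)
    (q ξ p : ℝ → Fin n → ℝ)
    (hq : ∀ i, ContDiff ℝ (⊤ : ℕ∞) fun t => q t i)
    (hξ : ∀ i, Differentiable ℝ fun t => ξ t i)
    (hp : ∀ i, Differentiable ℝ fun t => p t i)
    -- controlled dynamics:  q̈^j + Γ^j_{kℓ} q̇^k q̇^ℓ + M^{jℓ} ∂_ℓ V = ξ^j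
    (hdyn : ∀ t j,
      deriv (fun s => deriv (fun r => q r j) s) t
        + (∑ k, ∑ l, Γ (q t) j k l * deriv (fun r => q r k) t * deriv (fun r => q r l) t)
        + (∑ l, Minv (q t) j l * pd l V (q t))
        = ∑ l, Minv (q t) j l * ξ t l)
    -- adjoint equation for ξ:  ξ̇_j = 2Γ^i_{kj} q̇^k ξ_i − p_j
    (hξdot : ∀ t j, deriv (fun s => ξ s j) t =
      2 * (∑ i, ∑ k, Γ (q t) i k j * deriv (fun r => q r k) t * ξ t i) - p t j)
    -- adjoint equation for p:
    -- ṗ_j = (∂_j Γ^i_{kℓ}) q̇^k q̇^ℓ ξ_i + ∂_j(M^{iℓ} ∂_ℓ V) ξ_i − (1/2)(∂_j M^{kℓ}) ξ_k ξ_ℓ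
    (hpdot : ∀ t j, deriv (fun s => p s j) t =
      (∑ i, ∑ k, ∑ l, pd j (fun q' => Γ q' i k l) (q t)
          * deriv (fun r => q r k) t * deriv (fun r => q r l) t * ξ t i)
        + (∑ i, pd j (fun q' => ∑ l, Minv q' i l * pd l V q') (q t) * ξ t i)
        - (1 / 2) * ∑ k, ∑ l, pd j (fun q' => Minv q' k l) (q t) * ξ t k * ξ t l)
    (t : ℝ) (j : Fin n) :
    covD Γ q (fun s => covD Γ q ξ s) t j
      + (∑ i, ∑ k, ∑ l, riemann Γ (q t) i k l j
          * deriv (fun r => q r k) t * deriv (fun r => q r l) t * ξ t i)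
      + (∑ k, (pd j (fun q' => pd k V q') (q t)
            - ∑ i, Γ (q t) i j k * pd i V (q t)) * (∑ l, Minv (q t) k l * ξ t l))
      = 0 := by
  have hΓs : ∀ i a b, ContDiff ℝ (⊤ : ℕ∞) (fun q' => Γ q' i a b) := fun i a b =>
    Gamma_smooth hMsmooth hMinvsmooth hΓ i a b
  have hΓsym : ∀ x i a b, Γ x i a b = Γ x i b a := fun x i a b => Gamma_symm hMsym hΓ x i a b
  have hVs : ∀ l, ContDiff ℝ (⊤ : ℕ∞) (fun q' => pd l V q') := fun l => contDiff_pd hV l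
  have hη : ∀ s i, covD Γ q ξ s i
      = (∑ a, ∑ k, Γ (q s) a i k * deriv (fun r => q r k) s * ξ s a) - p s i := by
    intro s i
    simp only [covD]
    rw [hξdot s i]
    have h2 : (∑ a, ∑ k, Γ (q s) a k i * deriv (fun r => q r k) s * ξ s a)
        = ∑ a, ∑ k, Γ (q s) a i k * deriv (fun r => q r k) s * ξ s a :=
      Finset.sum_congr rfl fun a _ => Finset.sum_congr rfl fun k _ => by
        rw [hΓsym (q s) a k i]
    rw [h2]
    ring
  have hqd : ∀ k, Differentiable ℝ (fun s => deriv (fun r => q r k) s) := fun k =>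
    (contDiff_infty_iff_deriv.1 ((hq k).of_le (by simp))).2.differentiable (by simp)
  have hD : HasDerivAt (fun s => covD Γ q ξ s j)
      ((∑ i, ∑ k,
         (((∑ l, pd l (fun q' => Γ q' i j k) (q t) * deriv (fun r => q r l) t)
              * deriv (fun r => q r k) t
            + Γ (q t) i j k * deriv (fun s => deriv (fun r => q r k) s) t) * ξ t i
          + Γ (q t) i j k * deriv (fun r => q r k) t * deriv (fun s => ξ s i) t))
        - deriv (fun s => p s j) t) t := by
    have hfe : (fun s => covD Γ q ξ s j)
        = fun s => (∑ a, ∑ k, Γ (q s) a j k * deriv (fun r => q r k) s * ξ s a) - p s j :=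
      funext fun s => hη s j
    rw [hfe]
    refine HasDerivAt.sub ?_ ((hp j t).hasDerivAt)
    refine HasDerivAt.fun_sum fun i _ => ?_
    refine HasDerivAt.fun_sum fun k _ => ?_
    exact ((hasDerivAt_comp_pd (hΓs i j k) hq t).mul ((hqd k t).hasDerivAt)).mul
      ((hξ i t).hasDerivAt)
  have ha : ∀ k, deriv (fun s => deriv (fun r => q r k) s) t
      = (∑ l, Minv (q t) k l * ξ t l)
        - (∑ a, ∑ b, Γ (q t) k a b * deriv (fun r => q r a) t * deriv (fun r => q r b) t)
        - (∑ l, Minv (q t) k l * pd l V (q t)) := by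
    intro k; have := hdyn t k; linarith
  have hPD : ∀ i, pd j (fun q' => ∑ l, Minv q' i l * pd l V q') (q t)
      = ∑ l, (pd j (fun q' => Minv q' i l) (q t) * pd l V (q t)
          + Minv (q t) i l * pd j (fun q' => pd l V q') (q t)) := fun i =>
    pd_sum_mul j (fun l q' => Minv q' i l) (fun l q' => pd l V q')
      (fun l => hMinvsmooth i l) (fun l => hVs l) (q t)
  have hI3 : ∀ a b, pd j (fun q' => Minv q' a b) (q t)
      = -∑ k, (Γ (q t) b j k * Minv (q t) k a + Γ (q t) a j k * Minv (q t) k b) :=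
    fun a b => I3 hMsmooth hMinvsmooth hMsym hInv hΓ j a b (q t)
  rw [show covD Γ q (fun s => covD Γ q ξ s) t j
      = deriv (fun s => covD Γ q ξ s j) t
        - ∑ i, ∑ k, Γ (q t) i j k * deriv (fun r => q r k) t * covD Γ q ξ t i from rfl]
  rw [hD.deriv]
  simp only [hη, riemann, hξdot, hpdot, ha, hPD, hI3]
  have hGsym' : ∀ i a b, Γ (q t) i a b = Γ (q t) i b a := fun i a b => hΓsym (q t) i a b
  have hWsym' : ∀ a b, Minv (q t) a b = Minv (q t) b a := fun a b =>
    Minv_symm hMsym hInv (q t) a b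
  have hDGsym' : ∀ l i a b, pd l (fun q' => Γ q' i a b) (q t)
      = pd l (fun q' => Γ q' i b a) (q t) := by
    intro l i a b
    have h : (fun q' => Γ q' i a b) = fun q' => Γ q' i b a := funext fun y => hΓsym y i a b
    rw [h]
  exact key_algebra j (fun i a b => Γ (q t) i a b)
    (fun l i a b => pd l (fun q' => Γ q' i a b) (q t))
    (fun a b => Minv (q t) a b)
    (fun k => deriv (fun r => q r k) t)
    (fun i => ξ t i) (fun i => p t i)
    (fun l => pd l V (q t)) (fun l => pd j (fun q' => pd l V q') (q t))
    hGsym' hWsym' hDGsym'
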